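/- For any additive functions α, β : ℝ → ℝ with α + β = id, any n ∈ ℕ, x ∈ ℝ and h > 0, the function f(x) = (α(x))^{n+1} + (β(x))^{n+1} satisfies Δ_h^{n+1} f(x) = (n+1)!·((α(h))^{n+1} + (β(h))^{n+1}). -/
import Mathlib


open List Finset

/-- One-step difference operator: `Δ h f x = f (x + h) - f x`. -/
noncomputable def dOp (h : ℝ) (f : ℝ → ℝ) : ℝ → ℝ := fun x => f (x + h) - f x

/-- Iterated difference operator `Δ_{h₁…hₙ} f`, with
`Δ_{h₁…hₙhₙ₊₁} f = Δ_{h₁…hₙ} (Δ_{hₙ₊₁} f)`. -/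
noncomputable def dOps (hs : List ℝ) (f : ℝ → ℝ) : ℝ → ℝ := hs.foldr dOp f

lemma dOps_replicate (k : ℕ) (h : ℝ) (f : ℝ → ℝ) :
    dOps (List.replicate k h) f = (fwdDiff h)^[k] f := by
  induction k with
  | zero => rfl
  | succ k ih =>
    show dOp h (dOps (List.replicate k h) f) = _
    rw [ih, Function.iterate_succ_apply']
    rfl

lemma fwdDiff_iter_comp (a : ℝ → ℝ) (ha : ∀ x y, a (x + y) = a x + a y) (h : ℝ) :
    ∀ (k : ℕ) (g : ℝ → ℝ) (x : ℝ),
      (fwdDiff h)^[k] (fun t => g (a t)) x = (fwdDiff (a h))^[k] g (a x) := by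
  intro k
  induction k with
  | zero => intro g x; simp
  | succ k ih =>
    intro g x
    rw [Function.iterate_succ_apply, Function.iterate_succ_apply]
    have key : fwdDiff h (fun t => g (a t)) = fun t => (fwdDiff (a h) g) (a t) := by
      funext t
      simp [fwdDiff, ha]
    rw [key, ih]

lemma pow_diff (m : ℕ) (c : ℝ) :
    fwdDiff c (fun t : ℝ => t ^ m)
      = fun x => ∑ j ∈ range m, (m.choose j : ℝ) * c ^ (m - j) * x ^ j := by
  funext x
  have := add_pow x c m
  simp only [fwdDiff, this, Finset.sum_range_succ, Nat.choose_self, Nat.sub_self, pow_zero,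
    Nat.cast_one, mul_one, one_mul]
  rw [add_sub_cancel_right]
  exact Finset.sum_congr rfl fun j _ => by ring

lemma iter_pow_lt : ∀ (m k : ℕ), m < k → ∀ (c x : ℝ),
    (fwdDiff c)^[k] (fun t : ℝ => t ^ m) x = 0 := by
  intro m
  induction m using Nat.strong_induction_on with
  | _ m IH =>
    intro k hk c x
    obtain ⟨k, rfl⟩ : ∃ k', k = k' + 1 := ⟨k - 1, by omega⟩
    rw [Function.iterate_succ_apply, pow_diff]
    have : (fun x : ℝ => ∑ j ∈ range m, (m.choose j : ℝ) * c ^ (m - j) * x ^ j)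
        = ∑ j ∈ range m, ((m.choose j : ℝ) * c ^ (m - j)) • (fun t : ℝ => t ^ j) := by
      funext y; simp [mul_assoc]
    rw [this, fwdDiff_iter_finset_sum]
    rw [Finset.sum_apply]
    refine Finset.sum_eq_zero fun j hj => ?_
    have hjm : j < m := Finset.mem_range.mp hj
    rw [fwdDiff_iter_const_smul, Pi.smul_apply, IH j hjm k (by omega) c x, smul_zero]

lemma iter_pow_self : ∀ (m : ℕ) (c x : ℝ),
    (fwdDiff c)^[m] (fun t : ℝ => t ^ m) x = (Nat.factorial m : ℝ) * c ^ m := by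
  intro m
  induction m with
  | zero => intro c x; simp
  | succ m ih =>
    intro c x
    rw [Function.iterate_succ_apply, pow_diff]
    have : (fun x : ℝ => ∑ j ∈ range (m + 1), ((m + 1).choose j : ℝ) * c ^ (m + 1 - j) * x ^ j)
        = ∑ j ∈ range (m + 1), (((m + 1).choose j : ℝ) * c ^ (m + 1 - j)) • (fun t : ℝ => t ^ j) := by
      funext y; simp [mul_assoc]
    rw [this, fwdDiff_iter_finset_sum, Finset.sum_apply, Finset.sum_range_succ]
    rw [Finset.sum_eq_zero fun j hj => by
      rw [fwdDiff_iter_const_smul, Pi.smul_apply,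
        iter_pow_lt j m (Finset.mem_range.mp hj) c x, smul_zero]]
    rw [fwdDiff_iter_const_smul, Pi.smul_apply, ih c x]
    simp only [Nat.choose_succ_self_right, Nat.add_sub_cancel_left, pow_one, zero_add,
      smul_eq_mul, Nat.factorial_succ]
    push_cast
    ring

theorem stmt18 (n : ℕ) (α β : ℝ → ℝ)
    (hα : ∀ x y, α (x + y) = α x + α y) (hβ : ∀ x y, β (x + y) = β x + β y)
    (hid : ∀ x, α x + β x = x) (x h : ℝ) (hh : 0 < h) :
    dOps (List.replicate (n + 1) h) (fun t => (α t) ^ (n + 1) + (β t) ^ (n + 1)) x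
      = (Nat.factorial (n + 1) : ℝ) * ((α h) ^ (n + 1) + (β h) ^ (n + 1)) := by
  rw [dOps_replicate]
  have hsplit : (fun t => (α t) ^ (n + 1) + (β t) ^ (n + 1))
      = (fun t => (α t) ^ (n + 1)) + (fun t => (β t) ^ (n + 1)) := rfl
  rw [hsplit, fwdDiff_iter_add, Pi.add_apply]
  have hA : (fwdDiff h)^[n + 1] (fun t => (α t) ^ (n + 1)) x
      = (Nat.factorial (n + 1) : ℝ) * (α h) ^ (n + 1) := by
    rw [fwdDiff_iter_comp α hα h (n + 1) (fun t : ℝ => t ^ (n + 1)) x, iter_pow_self]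
  have hB : (fwdDiff h)^[n + 1] (fun t => (β t) ^ (n + 1)) x
      = (Nat.factorial (n + 1) : ℝ) * (β h) ^ (n + 1) := by
    rw [fwdDiff_iter_comp β hβ h (n + 1) (fun t : ℝ => t ^ (n + 1)) x, iter_pow_self]
  rw [hA, hB]
  ring
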